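/- Fix a ∈ k and an integer n ≥ 2. Let U_a be the representation of the super Jordan plane on kⁿ with basis {v1, …, vn} given by X1 v2 = v1, X1 vi = 0 for i ≠ 2, X2 v1 = a·v1, X2 vi = a·vi + v_{i+1} for 2 ≤ i ≤ n−1, and X2 vn = a·vn. Then (X1, X2) satisfies the defining relations X1² = 0 and X2²X1 = X1X2² + X1X2X1, and U_a is an indecomposable representation. -/
import Mathlib


/-- A subspace `W` is a submodule for the representation `(X1, X2)` of the super Jordan
plane if it is invariant under both `X1` and `X2`. -/
def IsSubrep {k V : Type*} [Field k] [AddCommGroup V] [Module k V]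
    (X1 X2 : Module.End k V) (W : Submodule k V) : Prop :=
  Submodule.map X1 W ≤ W ∧ Submodule.map X2 W ≤ W

/-- The representation `(X1, X2)` is indecomposable: `V ≠ 0` and `V` is not the direct
sum of two nonzero submodules. -/
def IsIndecomposable {k V : Type*} [Field k] [AddCommGroup V] [Module k V]
    (X1 X2 : Module.End k V) : Prop :=
  Nontrivial V ∧ ¬ ∃ W L : Submodule k V, IsSubrep X1 X2 W ∧ IsSubrep X1 X2 L ∧
    W ≠ ⊥ ∧ L ≠ ⊥ ∧ IsCompl W L

/-- The family `𝒰ₐ`: on `kⁿ` with standard basis `v₀, …, vₙ₋₁` (written `v₁, …, vₙ` in the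
paper), `X1 v₁ = v₀`, `X1 vᵢ = 0` otherwise, `X2 v₀ = a•v₀`, `X2 vᵢ = a•vᵢ + vᵢ₊₁` for
`1 ≤ i ≤ n-2`, and `X2 vₙ₋₁ = a•vₙ₋₁`.  It satisfies the defining relations of the super
Jordan plane and is indecomposable. -/
theorem stmt18 (k : Type*) [Field k] [CharZero k] (a : k) (n : ℕ) (hn : 2 ≤ n)
    (X1 X2 : Module.End k (Fin n → k))
    (hX1a : X1 (Pi.single (⟨1, by omega⟩ : Fin n) (1 : k)) =
      (Pi.single (⟨0, by omega⟩ : Fin n) (1 : k) : Fin n → k))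
    (hX1b : ∀ i : Fin n, i ≠ ⟨1, by omega⟩ → X1 (Pi.single i (1 : k)) = 0)
    (hX2a : X2 (Pi.single (⟨0, by omega⟩ : Fin n) (1 : k)) =
      a • (Pi.single (⟨0, by omega⟩ : Fin n) (1 : k) : Fin n → k))
    (hX2b : ∀ (i : Fin n) (_ : 1 ≤ i.1) (_ : i.1 ≤ n - 2),
      X2 (Pi.single i (1 : k)) =
        a • (Pi.single i (1 : k) : Fin n → k) +
          (Pi.single (⟨i.1 + 1, by omega⟩ : Fin n) (1 : k) : Fin n → k))
    (hX2c : X2 (Pi.single (⟨n - 1, by omega⟩ : Fin n) (1 : k)) =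
      a • (Pi.single (⟨n - 1, by omega⟩ : Fin n) (1 : k) : Fin n → k)) :
    X1 * X1 = 0 ∧ X2 ^ 2 * X1 = X1 * X2 ^ 2 + X1 * X2 * X1 ∧
      IsIndecomposable X1 X2 := by
  classical
  have hn1 : 1 < n := by omega
  have hn0 : 0 < n := by omega
  have hnn : n - 1 < n := by omega
  -- basis expansion
  have hrepr : ∀ u : Fin n → k, ∑ i, u i • (Pi.single i (1:k) : Fin n → k) = u := by
    intro u
    conv_rhs => rw [← Finset.univ_sum_single u]
    refine Finset.sum_congr rfl fun i _ => ?_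
    rw [← Pi.single_smul]; norm_num
  have hlin : ∀ (f : Module.End k (Fin n → k)) (u : Fin n → k),
      f u = ∑ i, u i • f (Pi.single i (1:k)) := by
    intro f u
    conv_lhs => rw [← hrepr u]
    rw [map_sum]
    exact Finset.sum_congr rfl fun i _ => (map_smul f _ _)
  -- X1 on a general vector
  have hX1u : ∀ u : Fin n → k,
      X1 u = u ⟨1, hn1⟩ • (Pi.single (⟨0, hn0⟩ : Fin n) (1:k) : Fin n → k) := by
    intro u
    rw [hlin X1 u, Finset.sum_eq_single (⟨1, hn1⟩ : Fin n)]
    · rw [hX1a]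
    · intro i _ hi; rw [hX1b i hi, smul_zero]
    · intro h; exact absurd (Finset.mem_univ _) h
  -- the nilpotent part N = X2 - a
  set N : Module.End k (Fin n → k) := X2 - a • 1 with hNdef
  have hNapp : ∀ u : Fin n → k, N u = X2 u - a • u := by
    intro u; simp [hNdef]
  have hNsingle : ∀ i : Fin n, N (Pi.single i (1:k)) =
      if h : 1 ≤ i.1 ∧ i.1 ≤ n - 2 then
        (Pi.single (⟨i.1 + 1, by omega⟩ : Fin n) (1:k) : Fin n → k) else 0 := by
    intro i
    rw [hNapp]
    split_ifs with h
    · rw [hX2b i h.1 h.2]; abel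
    · have : i.1 = 0 ∨ i.1 = n - 1 := by omega
      rcases this with h0 | h0
      · have hi : i = (⟨0, hn0⟩ : Fin n) := Fin.ext h0
        rw [hi, hX2a]; abel
      · have hi : i = (⟨n - 1, hnn⟩ : Fin n) := Fin.ext h0
        rw [hi, hX2c]; abel
  -- coordinate formula for N
  have hNu : ∀ (u : Fin n → k) (t : Fin n),
      N u t = if h : 2 ≤ t.1 then
        u ⟨t.1 - 1, Nat.lt_of_le_of_lt (Nat.sub_le _ _) t.isLt⟩ else 0 := by
    intro u t
    rw [hlin N u, Finset.sum_apply]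
    split_ifs with ht
    · rw [Finset.sum_eq_single (⟨t.1 - 1, Nat.lt_of_le_of_lt (Nat.sub_le _ _) t.isLt⟩ : Fin n)]
      · rw [hNsingle, dif_pos (by simp only [Fin.val_mk]; omega)]
        rw [Pi.smul_apply, Pi.single_apply,
          if_pos (Fin.ext (by simp only [Fin.val_mk]; omega)), smul_eq_mul, mul_one]
      · intro i _ hi
        rw [hNsingle]
        split_ifs with h
        · rw [Pi.smul_apply, Pi.single_apply, if_neg, smul_eq_mul, mul_zero]
          intro he
          apply hi
          apply Fin.ext
          have hte : t.1 = i.1 + 1 := by simpa using congrArg Fin.val he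
          simp only [Fin.val_mk]
          omega
        · simp
      · intro h; exact absurd (Finset.mem_univ _) h
    · apply Finset.sum_eq_zero
      intro i _
      rw [hNsingle]
      split_ifs with h
      · rw [Pi.smul_apply, Pi.single_apply, if_neg, smul_eq_mul, mul_zero]
        intro he
        have hte : t.1 = i.1 + 1 := by simpa using congrArg Fin.val he
        omega
      · simp
  -- powers of N
  have hNpow : ∀ (j : ℕ) (u : Fin n → k) (t : Fin n),
      (N ^ (j + 1)) u t = if h : j + 2 ≤ t.1 then
        u ⟨t.1 - (j + 1), Nat.lt_of_le_of_lt (Nat.sub_le _ _) t.isLt⟩ else 0 := by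
    intro j
    induction j with
    | zero =>
      intro u t
      rw [pow_one]
      rw [hNu u t]
    | succ j ih =>
      intro u t
      have hp : (N ^ (j + 1 + 1)) u = (N ^ (j + 1)) (N u) := by
        rw [pow_succ, Module.End.mul_apply]
      rw [hp, ih (N u) t]
      by_cases h1 : j + 2 ≤ t.1
      · rw [dif_pos h1, hNu]
        simp only [Fin.val_mk]
        by_cases h3 : j + 1 + 2 ≤ t.1
        · rw [dif_pos (by omega : 2 ≤ t.1 - (j + 1)), dif_pos h3]
          exact congrArg u (Fin.ext (by simp only [Fin.val_mk]; omega))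
        · rw [dif_neg (by omega : ¬ 2 ≤ t.1 - (j + 1)), dif_neg h3]
      · rw [dif_neg h1, dif_neg (by omega)]
  -- invariant subspaces are stable under powers of N
  have hNmem : ∀ (W : Submodule k (Fin n → k)), Submodule.map X2 W ≤ W →
      ∀ (j : ℕ) (u : Fin n → k), u ∈ W → (N ^ j) u ∈ W := by
    intro W hI j
    induction j with
    | zero => intro u hu; rw [pow_zero]; exact hu
    | succ j ih =>
      intro u hu
      have hp : (N ^ (j + 1)) u = (N ^ j) (N u) := by
        rw [pow_succ, Module.End.mul_apply]
      rw [hp]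
      apply ih
      rw [hNapp]
      exact W.sub_mem (hI (Submodule.mem_map_of_mem hu)) (W.smul_mem a hu)
  -- Lemma C : N^(n-2) on vectors with zero 0-coordinate
  have hC : ∀ u : Fin n → k, u ⟨0, hn0⟩ = 0 →
      (N ^ (n - 2)) u = u ⟨1, hn1⟩ • (Pi.single (⟨n - 1, hnn⟩ : Fin n) (1:k) : Fin n → k) := by
    intro u h0
    rcases Nat.lt_or_ge n 3 with h3 | h3
    · have hn2 : n - 2 = 0 := by omega
      rw [hn2, pow_zero, Module.End.one_apply]
      funext t
      have : t.1 = 0 ∨ t.1 = 1 := by have := t.isLt; omega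
      rcases this with h | h
      · have ht : t = (⟨0, hn0⟩ : Fin n) := Fin.ext h
        rw [ht, h0, Pi.smul_apply, Pi.single_apply, if_neg, smul_eq_mul, mul_zero]
        intro he
        have : (0:ℕ) = n - 1 := by
          have := congrArg Fin.val he; simpa using this
        omega
      · have ht : t = (⟨1, hn1⟩ : Fin n) := Fin.ext h
        rw [ht, Pi.smul_apply, Pi.single_apply, if_pos (Fin.ext (by simp; omega)),
          smul_eq_mul, mul_one]
    · have hexp : n - 2 = (n - 3) + 1 := by omega
      rw [hexp]
      funext t
      rw [hNpow]
      by_cases ht : t.1 = n - 1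
      · rw [dif_pos (by omega)]
        rw [Pi.smul_apply, Pi.single_apply, if_pos (Fin.ext (by simp [ht])), smul_eq_mul, mul_one]
        congr 1; apply Fin.ext; simp; omega
      · rw [dif_neg (by have := t.isLt; omega)]
        rw [Pi.smul_apply, Pi.single_apply, if_neg (fun he => ht (by simpa using congrArg Fin.val he)),
          smul_eq_mul, mul_zero]
  -- Lemma D : any nonzero invariant subspace contains a nonzero vector supported on {0, n-1}
  have hD : ∀ (L : Submodule k (Fin n → k)), Submodule.map X2 L ≤ L → L ≠ ⊥ →
      ∃ q, q ∈ L ∧ q ≠ 0 ∧ ∀ i : Fin n, 1 ≤ i.1 → i.1 ≤ n - 2 → q i = 0 := by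
    intro L hI hne
    obtain ⟨u, huL, hu0⟩ := Submodule.exists_mem_ne_zero_of_ne_bot hne
    by_cases hmid : ∃ m : ℕ, ∃ hm : m < n, 1 ≤ m ∧ m ≤ n - 2 ∧ u ⟨m, hm⟩ ≠ 0
    · set m := Nat.find hmid with hmdef
      obtain ⟨hmlt, hm1, hm2, hmne⟩ := Nat.find_spec hmid
      have key : (N ^ (n - 1 - m)) u =
          u ⟨m, hmlt⟩ • (Pi.single (⟨n - 1, hnn⟩ : Fin n) (1:k) : Fin n → k) := by
        have hexp : n - 1 - m = (n - 2 - m) + 1 := by omega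
        rw [hexp]
        funext t
        rw [hNpow]
        by_cases ht : t.1 = n - 1
        · rw [dif_pos (by omega)]
          rw [Pi.smul_apply, Pi.single_apply, if_pos (Fin.ext (by simp [ht])), smul_eq_mul, mul_one]
          congr 1; apply Fin.ext; simp; omega
        · rw [Pi.smul_apply, Pi.single_apply,
            if_neg (fun he => ht (by simpa using congrArg Fin.val he)), smul_eq_mul, mul_zero]
          split_ifs with hc
          · -- here t.1 - (n-2-m+1) < m, use minimality
            have hidx : t.1 - (n - 2 - m + 1) < m := by have := t.isLt; omega
            have hidx1 : 1 ≤ t.1 - (n - 2 - m + 1) := by omega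
            have := Nat.find_min hmid hidx
            by_contra hne2
            exact this ⟨Nat.lt_of_le_of_lt (Nat.sub_le _ _) t.isLt, hidx1, by omega, hne2⟩
          · rfl
      have hmem := hNmem L hI (n - 1 - m) u huL
      rw [key] at hmem
      refine ⟨Pi.single (⟨n - 1, hnn⟩ : Fin n) (1:k), ?_, ?_, ?_⟩
      · have := L.smul_mem (u ⟨m, hmlt⟩)⁻¹ hmem
        rwa [smul_smul, inv_mul_cancel₀ hmne, one_smul] at this
      · intro hq
        have := congrFun hq ⟨n - 1, hnn⟩
        rw [Pi.single_eq_same] at this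
        exact one_ne_zero this
      · intro i h1 h2
        apply Pi.single_eq_of_ne
        intro he
        have : i.1 = n - 1 := by simpa using congrArg Fin.val he
        omega
    · refine ⟨u, huL, hu0, fun i h1 h2 => ?_⟩
      by_contra h
      exact hmid ⟨i.1, i.isLt, h1, h2, by simpa using h⟩
  -- key step
  have hkey : ∀ (W L : Submodule k (Fin n → k)),
      Submodule.map X1 W ≤ W → Submodule.map X2 W ≤ W →
      Submodule.map X2 L ≤ L → L ≠ ⊥ → Disjoint W L →
      ∀ w ∈ W, w ⟨1, hn1⟩ ≠ 0 → False := by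
    intro W L hW1 hW2 hL2 hLne hdis w hwW hw1
    have h1 : X1 w ∈ W := hW1 (Submodule.mem_map_of_mem hwW)
    rw [hX1u w] at h1
    have hv0 : (Pi.single (⟨0, hn0⟩ : Fin n) (1:k) : Fin n → k) ∈ W := by
      have := W.smul_mem (w ⟨1, hn1⟩)⁻¹ h1
      rwa [smul_smul, inv_mul_cancel₀ hw1, one_smul] at this
    set w' : Fin n → k := w - w ⟨0, hn0⟩ • (Pi.single (⟨0, hn0⟩ : Fin n) (1:k) : Fin n → k) with hw'def
    have hw'W : w' ∈ W := W.sub_mem hwW (W.smul_mem _ hv0)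
    have hw'0 : w' ⟨0, hn0⟩ = 0 := by
      rw [hw'def, Pi.sub_apply, Pi.smul_apply, Pi.single_eq_same, smul_eq_mul, mul_one, sub_self]
    have hw'1 : w' ⟨1, hn1⟩ = w ⟨1, hn1⟩ := by
      rw [hw'def, Pi.sub_apply, Pi.smul_apply, Pi.single_apply,
        if_neg (fun he => by simp [Fin.ext_iff] at he),
        smul_eq_mul, mul_zero, sub_zero]
    have h2 := hNmem W hW2 (n - 2) w' hw'W
    rw [hC w' hw'0, hw'1] at h2
    have hvn : (Pi.single (⟨n - 1, hnn⟩ : Fin n) (1:k) : Fin n → k) ∈ W := by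
      have := W.smul_mem (w ⟨1, hn1⟩)⁻¹ h2
      rwa [smul_smul, inv_mul_cancel₀ hw1, one_smul] at this
    obtain ⟨q, hqL, hq0, hqmid⟩ := hD L hL2 hLne
    have hqW : q ∈ W := by
      have hq : q = q ⟨0, hn0⟩ • (Pi.single (⟨0, hn0⟩ : Fin n) (1:k) : Fin n → k) +
          q ⟨n - 1, hnn⟩ • (Pi.single (⟨n - 1, hnn⟩ : Fin n) (1:k) : Fin n → k) := by
        funext t
        rw [Pi.add_apply, Pi.smul_apply, Pi.smul_apply, Pi.single_apply, Pi.single_apply,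
          smul_eq_mul, smul_eq_mul]
        by_cases ht0 : t.1 = 0
        · rw [if_pos (Fin.ext ht0), if_neg (fun he => by
            have : t.1 = n - 1 := by simpa using congrArg Fin.val he
            omega), mul_one, mul_zero, add_zero]
          exact congrArg q (Fin.ext ht0)
        · by_cases htn : t.1 = n - 1
          · rw [if_neg (fun he => ht0 (by simpa using congrArg Fin.val he)),
              if_pos (Fin.ext htn), mul_zero, mul_one, zero_add]
            exact congrArg q (Fin.ext htn)
          · rw [if_neg (fun he => ht0 (by simpa using congrArg Fin.val he)),
              if_neg (fun he => htn (by simpa using congrArg Fin.val he)),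
              mul_zero, mul_zero, add_zero]
            exact hqmid t (by omega) (by have := t.isLt; omega)
      rw [hq]
      exact W.add_mem (W.smul_mem _ hv0) (W.smul_mem _ hvn)
    exact hq0 (Submodule.disjoint_def.mp hdis q hqW hqL)
  -- value of X2 at coordinate 1
  have hX2at1 : ∀ z : Fin n → k, X2 z ⟨1, hn1⟩ = a * z ⟨1, hn1⟩ := by
    intro z
    have h := hNu z ⟨1, hn1⟩
    rw [dif_neg (by simp only [Fin.val_mk]; omega)] at h
    rw [hNapp, Pi.sub_apply, Pi.smul_apply, smul_eq_mul] at h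
    have := sub_eq_zero.mp h
    linear_combination this
  refine ⟨?_, ?_, ?_, ?_⟩
  · -- X1 * X1 = 0
    apply LinearMap.ext
    intro u
    rw [Module.End.mul_apply, hX1u u, map_smul, hX1u (Pi.single (⟨0, hn0⟩ : Fin n) (1:k))]
    rw [Pi.single_apply, if_neg (fun he => by simp [Fin.ext_iff] at he)]
    simp
  · -- the cubic relation
    apply LinearMap.ext
    intro u
    have e1 : X1 u = u ⟨1, hn1⟩ • (Pi.single (⟨0, hn0⟩ : Fin n) (1:k) : Fin n → k) := hX1u u
    simp only [pow_two, Module.End.mul_apply, LinearMap.add_apply]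
    rw [e1, map_smul, map_smul, hX2a, map_smul, map_smul, hX2a]
    rw [hX1u (X2 (X2 u)), hX2at1 (X2 u), hX2at1 u]
    rw [map_smul, hX1u (Pi.single (⟨0, hn0⟩ : Fin n) (1:k)), Pi.single_apply,
      if_neg (fun he => by simp [Fin.ext_iff] at he), zero_smul, smul_zero, smul_zero, add_zero]
    simp only [smul_smul]
    congr 1
    ring
  · -- nontrivial
    have : Nonempty (Fin n) := ⟨⟨0, hn0⟩⟩
    infer_instance
  · -- indecomposable
    rintro ⟨W, L, ⟨hW1, hW2⟩, ⟨hL1, hL2⟩, hWne, hLne, hcompl⟩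
    have hmem : (Pi.single (⟨1, hn1⟩ : Fin n) (1:k) : Fin n → k) ∈ W ⊔ L := by
      rw [hcompl.sup_eq_top]; trivial
    obtain ⟨w, hw, l, hl, hwl⟩ := Submodule.mem_sup.mp hmem
    have hsum : w ⟨1, hn1⟩ + l ⟨1, hn1⟩ = 1 := by
      have := congrFun hwl ⟨1, hn1⟩
      rwa [Pi.add_apply, Pi.single_eq_same] at this
    by_cases hw1 : w ⟨1, hn1⟩ = 0
    · have hl1 : l ⟨1, hn1⟩ ≠ 0 := by
        intro h; rw [hw1, h, add_zero] at hsum; exact zero_ne_one hsum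
      exact hkey L W hL1 hL2 hW2 hWne hcompl.disjoint.symm l hl hl1
    · exact hkey W L hW1 hW2 hL2 hLne hcompl.disjoint w hw hw1
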